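/- arXiv:2411.16303 — 2 statements merged into one kernel-verified Lean document; each statement's English description precedes it below -/
import Mathlib

section
/- Consider Algorithm 1 option (i) under Assumptions 1 and 2 with each f_i L-smooth. If the local learning rate satisfies η_l ≤ 1/(8KL), then for every round t and every local step k ∈ {1,…,K}, the average local drift satisfies (1/N)∑_{i=1}^N E[‖x_i^{t,k} − x^t‖²] ≤ 5 K η_l² (σ_l² + 6K σ_g²) + 30 K² η_l² E[‖∇f(x^t)‖²]. -/
open MeasureTheory ProbabilityTheory

/-- The global empirical risk `f = (1/N) ∑ᵢ fᵢ`. -/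
noncomputable def globalObjective {E : Type*} (N : ℕ) (f : Fin N → E → ℝ) : E → ℝ :=
  fun x => (N : ℝ)⁻¹ * ∑ i, f i x

/-!
Write `x_{k+1} - x⁰ = (x_k - x⁰ - η ∇fᵢ(x_k)) - η (g_k - ∇fᵢ(x_k))`. The first term is
`𝓕_k`-measurable and the noise has zero conditional mean, so the two are orthogonal in `L²` and the
noise only adds `η² σ_l²`. Young's inequality with weight `t = 1/(2K-1)` (so that `1 + 1/t = 2K`)
and `‖∇fᵢ(y)‖² ≤ 3L²‖y - x⁰‖² + 3σ_g² + 3‖∇f(x⁰)‖²` give, client by client, the recursion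
`a_{k+1} ≤ (1 + t + 6Kη²L²) a_k + η²(σ_l² + 6K(σ_g² + E‖∇f(x⁰)‖²))` for `a_k = E‖x_k - x⁰‖²`.
Since `ηKL ≤ 1/8`, the growth factor satisfies `(1 + t + 6Kη²L²)^(K-1) ≤ e < 3`, so
`a_k ≤ 3Kη²(σ_l² + 6K(σ_g² + E‖∇f(x⁰)‖²))` for `k ≤ K`, and the average over clients inherits this.
-/

open scoped InnerProductSpace NNReal

theorem le_mul_geom_sum_of_le_mul_add {a : ℕ → ℝ} {c β : ℝ} (hc : 0 ≤ c) (h₀ : a 0 = 0)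
    (hstep : ∀ k, a (k + 1) ≤ c * a k + β) (k : ℕ) : a k ≤ β * ∑ j ∈ Finset.range k, c ^ j := by
  induction k with
  | zero => simp [h₀]
  | succ k ih =>
    calc a (k + 1) ≤ c * (β * ∑ j ∈ Finset.range k, c ^ j) + β :=
          (hstep k).trans (by gcongr)
      _ = β * ∑ j ∈ Finset.range (k + 1), c ^ j := by rw [geom_sum_succ]; ring

theorem geom_sum_one_add_le_three_mul {ε : ℝ} (hε : 0 ≤ ε) {n k : ℕ} (hk : k ≤ n)
    (hnε : ((n : ℝ) - 1) * ε ≤ 1) : ∑ j ∈ Finset.range k, (1 + ε) ^ j ≤ 3 * k := by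
  have hterm : ∀ j ∈ Finset.range k, (1 + ε) ^ j ≤ 3 := by
    intro j hj
    have hjn : (j : ℝ) + 1 ≤ n := by exact_mod_cast (Finset.mem_range.1 hj).trans_le hk
    have hjε : j * ε ≤ 1 := (mul_le_mul_of_nonneg_right (by linarith) hε).trans hnε
    calc (1 + ε) ^ j ≤ Real.exp ε ^ j :=
          pow_le_pow_left₀ (by linarith) (by linarith [Real.add_one_le_exp ε]) j
      _ = Real.exp (j * ε) := (Real.exp_nat_mul ε j).symm
      _ ≤ Real.exp 1 := Real.exp_le_exp.2 hjε
      _ ≤ 3 := Real.exp_one_lt_d9.le.trans (by norm_num)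
  simpa [mul_comm] using Finset.sum_le_card_nsmul _ _ _ hterm

section Young

variable {E : Type*} [SeminormedAddCommGroup E]

theorem norm_sub_sq_le_one_add_mul (x y : E) {t : ℝ} (ht : 0 < t) :
    ‖x - y‖ ^ 2 ≤ (1 + t) * ‖x‖ ^ 2 + (1 + t⁻¹) * ‖y‖ ^ 2 := by
  have hsq : 0 ≤ t⁻¹ * (t * ‖x‖ - ‖y‖) ^ 2 := by positivity
  have hexpand : t⁻¹ * (t * ‖x‖ - ‖y‖) ^ 2 = t * ‖x‖ ^ 2 - 2 * ‖x‖ * ‖y‖ + t⁻¹ * ‖y‖ ^ 2 := by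
    field_simp
    ring
  have htri : ‖x - y‖ ≤ ‖x‖ + ‖y‖ := norm_sub_le x y
  nlinarith [norm_nonneg (x - y)]

theorem norm_add₃_sq_le (x y z : E) : ‖x + y + z‖ ^ 2 ≤ 3 * (‖x‖ ^ 2 + ‖y‖ ^ 2 + ‖z‖ ^ 2) := by
  have htri : ‖x + y + z‖ ≤ ‖x‖ + ‖y‖ + ‖z‖ := norm_add₃_le
  nlinarith [norm_nonneg (x + y + z), sq_nonneg (‖x‖ - ‖y‖), sq_nonneg (‖y‖ - ‖z‖),
    sq_nonneg (‖x‖ - ‖z‖)]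

theorem LipschitzWith.norm_sq_le_of_norm_sub_sq_le {F : Type*} [SeminormedAddCommGroup F]
    {φ ψ : E → F} {K : ℝ≥0}
    (hφ : LipschitzWith K φ) {σ : ℝ} (hφψ : ∀ x, ‖φ x - ψ x‖ ^ 2 ≤ σ ^ 2) (x y : E) :
    ‖φ y‖ ^ 2 ≤ 3 * K ^ 2 * ‖y - x‖ ^ 2 + 3 * σ ^ 2 + 3 * ‖ψ x‖ ^ 2 := by
  have hlip : ‖φ y - φ x‖ ^ 2 ≤ K ^ 2 * ‖y - x‖ ^ 2 := by
    rw [← mul_pow]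
    exact pow_le_pow_left₀ (norm_nonneg _) (hφ.norm_sub_le y x) 2
  calc ‖φ y‖ ^ 2 = ‖(φ y - φ x) + (φ x - ψ x) + ψ x‖ ^ 2 := by congr 1; abel_nf
    _ ≤ 3 * (‖φ y - φ x‖ ^ 2 + ‖φ x - ψ x‖ ^ 2 + ‖ψ x‖ ^ 2) := norm_add₃_sq_le _ _ _
    _ ≤ _ := by linarith [hφψ x]

theorem LipschitzWith.norm_sub_sub_smul_sq_le [NormedSpace ℝ E] {φ ψ : E → E} {K : ℝ≥0}
    (hφ : LipschitzWith K φ) {σ : ℝ} (hφψ : ∀ x, ‖φ x - ψ x‖ ^ 2 ≤ σ ^ 2) {t : ℝ} (ht : 0 < t)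
    (η : ℝ) (x y : E) :
    ‖y - x - η • φ y‖ ^ 2 ≤ (1 + t + 3 * (1 + t⁻¹) * η ^ 2 * K ^ 2) * ‖y - x‖ ^ 2
      + 3 * (1 + t⁻¹) * η ^ 2 * (σ ^ 2 + ‖ψ x‖ ^ 2) := by
  have hyoung := norm_sub_sq_le_one_add_mul (y - x) (η • φ y) ht
  have hgrad := hφ.norm_sq_le_of_norm_sub_sq_le hφψ x y
  have hc : 0 ≤ (1 + t⁻¹) * η ^ 2 := by positivity
  rw [norm_smul, mul_pow, Real.norm_eq_abs, sq_abs] at hyoung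
  nlinarith [mul_le_mul_of_nonneg_left hgrad hc]

end Young

section SquareIntegrable

variable {Ω E : Type*} [NormedAddCommGroup E] {m : MeasurableSpace Ω} {μ : Measure Ω}

theorem MeasureTheory.MemLp.integrable_norm_sq {f : Ω → E} (hf : MemLp f 2 μ) :
    Integrable (fun ω => ‖f ω‖ ^ 2) μ :=
  (memLp_two_iff_integrable_sq_norm hf.1).1 hf

theorem MeasureTheory.MemLp.integrable_inner [InnerProductSpace ℝ E] {f g : Ω → E}
    (hf : MemLp f 2 μ) (hg : MemLp g 2 μ) : Integrable (fun ω => ⟪f ω, g ω⟫_ℝ) μ := by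
  refine (L2.integrable_inner (𝕜 := ℝ) (hf.toLp f) (hg.toLp g)).congr ?_
  filter_upwards [hf.coeFn_toLp, hg.coeFn_toLp] with ω hfω hgω
  rw [hfω, hgω]

theorem LipschitzWith.memLp_comp {F : Type*} [NormedAddCommGroup F] [IsFiniteMeasure μ]
    {p : ENNReal} {φ : E → F} {K : ℝ≥0} (hφ : LipschitzWith K φ) {x : Ω → E}
    (hx : MemLp x p μ) : MemLp (fun ω => φ (x ω)) p μ := by
  have hshift : LipschitzWith K (fun y => φ y - φ 0) := by
    simpa using hφ.sub (LipschitzWith.const (φ 0))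
  convert (hshift.comp_memLp (sub_self _) hx).add (memLp_const (φ 0)) using 1
  ext ω
  simp

theorem LipschitzWith.integral_norm_sub_sub_smul_sq_le [NormedSpace ℝ E] [IsProbabilityMeasure μ]
    {φ ψ : E → E} {K : ℝ≥0} (hφ : LipschitzWith K φ) {σ : ℝ}
    (hφψ : ∀ x, ‖φ x - ψ x‖ ^ 2 ≤ σ ^ 2) {t : ℝ} (ht : 0 < t) (η : ℝ) {x₀ x : Ω → E}
    (hx₀ : MemLp x₀ 2 μ) (hx : MemLp x 2 μ) (hψx₀ : MemLp (fun ω => ψ (x₀ ω)) 2 μ) :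
    ∫ ω, ‖x ω - x₀ ω - η • φ (x ω)‖ ^ 2 ∂μ ≤
      (1 + t + 3 * (1 + t⁻¹) * η ^ 2 * K ^ 2) * ∫ ω, ‖x ω - x₀ ω‖ ^ 2 ∂μ
        + 3 * (1 + t⁻¹) * η ^ 2 * (σ ^ 2 + ∫ ω, ‖ψ (x₀ ω)‖ ^ 2 ∂μ) := by
  have hdrift : Integrable (fun ω => ‖x ω - x₀ ω‖ ^ 2) μ := (hx.sub hx₀).integrable_norm_sq
  have hψ : Integrable (fun ω => σ ^ 2 + ‖ψ (x₀ ω)‖ ^ 2) μ :=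
    (integrable_const _).add hψx₀.integrable_norm_sq
  calc ∫ ω, ‖x ω - x₀ ω - η • φ (x ω)‖ ^ 2 ∂μ
      ≤ ∫ ω, ((1 + t + 3 * (1 + t⁻¹) * η ^ 2 * K ^ 2) * ‖x ω - x₀ ω‖ ^ 2
          + 3 * (1 + t⁻¹) * η ^ 2 * (σ ^ 2 + ‖ψ (x₀ ω)‖ ^ 2)) ∂μ :=
        integral_mono_of_nonneg (.of_forall fun _ => by positivity)
          ((hdrift.const_mul _).add (hψ.const_mul _))
          (.of_forall fun ω => hφ.norm_sub_sub_smul_sq_le hφψ ht η (x₀ ω) (x ω))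
    _ = _ := by
        rw [integral_add (hdrift.const_mul _) (hψ.const_mul _), integral_const_mul,
          integral_const_mul, integral_add (integrable_const _) hψx₀.integrable_norm_sq]
        simp

end SquareIntegrable

section ConditionalOrthogonality

variable {Ω E : Type*} [NormedAddCommGroup E] [InnerProductSpace ℝ E] [CompleteSpace E]
  {m m₀ : MeasurableSpace Ω} {μ : Measure Ω} [IsFiniteMeasure μ]

theorem integral_inner_eq_zero_of_condExp_ae_eq_zero (hm : m ≤ m₀) {A Z : Ω → E}
    (hA : StronglyMeasurable[m] A) (hA₂ : MemLp A 2 μ) (hZ₂ : MemLp Z 2 μ)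
    (hZ : μ[Z|m] =ᵐ[μ] 0) : ∫ ω, ⟪A ω, Z ω⟫_ℝ ∂μ = 0 := by
  have hcond : (condExpL2 E ℝ hm (hZ₂.toLp Z) : Ω →₂[μ] E) = 0 := by
    rw [Lp.eq_zero_iff_ae_eq_zero]
    exact (hZ₂.condExpL2_ae_eq_condExp hm).trans hZ
  have hAm : AEStronglyMeasurable[m] (hA₂.toLp A) μ := ⟨A, hA, hA₂.coeFn_toLp⟩
  calc ∫ ω, ⟪A ω, Z ω⟫_ℝ ∂μ = ⟪hZ₂.toLp Z, hA₂.toLp A⟫_ℝ := by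
        rw [L2.inner_def]
        refine integral_congr_ae ?_
        filter_upwards [hA₂.coeFn_toLp, hZ₂.coeFn_toLp] with ω hAω hZω
        rw [hAω, hZω, real_inner_comm]
    _ = ⟪(condExpL2 E ℝ hm (hZ₂.toLp Z) : Ω →₂[μ] E), hA₂.toLp A⟫_ℝ :=
        (inner_condExpL2_eq_inner_fun hm _ _ hAm).symm
    _ = 0 := by rw [hcond]; exact inner_zero_left _

theorem integral_norm_sub_sq_of_condExp_ae_eq_zero (hm : m ≤ m₀) {A Z : Ω → E}
    (hA : StronglyMeasurable[m] A) (hA₂ : MemLp A 2 μ) (hZ₂ : MemLp Z 2 μ)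
    (hZ : μ[Z|m] =ᵐ[μ] 0) :
    ∫ ω, ‖A ω - Z ω‖ ^ 2 ∂μ = ∫ ω, ‖A ω‖ ^ 2 ∂μ + ∫ ω, ‖Z ω‖ ^ 2 ∂μ := by
  have hAZ := hA₂.integrable_inner hZ₂
  simp_rw [norm_sub_sq_real]
  rw [integral_add (f := fun ω => ‖A ω‖ ^ 2 - 2 * ⟪A ω, Z ω⟫_ℝ)
      (hA₂.integrable_norm_sq.sub (hAZ.const_mul 2)) hZ₂.integrable_norm_sq,
    integral_sub hA₂.integrable_norm_sq (hAZ.const_mul 2), integral_const_mul,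
    integral_inner_eq_zero_of_condExp_ae_eq_zero hm hA hA₂ hZ₂ hZ]
  ring

end ConditionalOrthogonality

section LocalSGD

variable {Ω E : Type*} [NormedAddCommGroup E] [InnerProductSpace ℝ E] [CompleteSpace E]
  {m : MeasurableSpace Ω} {μ : Measure Ω} [IsProbabilityMeasure μ]

theorem integral_norm_sub_sq_sgd_step_le {𝓕 : MeasurableSpace Ω} (h𝓕 : 𝓕 ≤ m) {φ ψ : E → E}
    {K : ℝ≥0} (hφ : LipschitzWith K φ) {σl σg : ℝ} (hφψ : ∀ x, ‖φ x - ψ x‖ ^ 2 ≤ σg ^ 2) {t : ℝ}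
    (ht : 0 < t) (η : ℝ) {x₀ x g : Ω → E} (hx₀ : StronglyMeasurable[𝓕] x₀)
    (hx₀₂ : MemLp x₀ 2 μ) (hψx₀ : MemLp (fun ω => ψ (x₀ ω)) 2 μ)
    (hx : StronglyMeasurable[𝓕] x) (hx₂ : MemLp x 2 μ) (hg₂ : MemLp g 2 μ)
    (hunbiased : μ[g|𝓕] =ᵐ[μ] fun ω => φ (x ω))
    (hvar : ∫ ω, ‖g ω - φ (x ω)‖ ^ 2 ∂μ ≤ σl ^ 2) :
    ∫ ω, ‖x ω - η • g ω - x₀ ω‖ ^ 2 ∂μ ≤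
      (1 + t + 3 * (1 + t⁻¹) * η ^ 2 * K ^ 2) * ∫ ω, ‖x ω - x₀ ω‖ ^ 2 ∂μ
        + η ^ 2 * σl ^ 2 + 3 * (1 + t⁻¹) * η ^ 2 * (σg ^ 2 + ∫ ω, ‖ψ (x₀ ω)‖ ^ 2 ∂μ) := by
  set G : Ω → E := fun ω => φ (x ω)
  have hG₂ : MemLp G 2 μ := hφ.memLp_comp hx₂
  have hGm : StronglyMeasurable[𝓕] G := hφ.continuous.comp_stronglyMeasurable hx
  have hnoise₂ : MemLp (fun ω => η • (g ω - G ω)) 2 μ := (hg₂.sub hG₂).const_smul η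
  have hnoise : μ[fun ω => η • (g ω - G ω)|𝓕] =ᵐ[μ] 0 := by
    have hGcond : μ[G|𝓕] = G :=
      condExp_of_stronglyMeasurable (μ := μ) h𝓕 hGm (hG₂.integrable one_le_two)
    filter_upwards [condExp_smul (μ := μ) η (g - G) 𝓕,
      condExp_sub (hg₂.integrable one_le_two) (hG₂.integrable one_le_two) 𝓕, hunbiased]
      with ω hsmul hsub hg
    rw [hGcond] at hsub
    change μ[η • (g - G)|𝓕] ω = 0
    rw [hsmul, Pi.smul_apply, hsub, Pi.sub_apply, hg, sub_self, smul_zero]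
  have hsplit : ∀ ω, x ω - η • g ω - x₀ ω = (x ω - x₀ ω - η • G ω) - η • (g ω - G ω) := by
    intro ω
    simp only [smul_sub]
    abel
  simp_rw [hsplit]
  rw [integral_norm_sub_sq_of_condExp_ae_eq_zero (A := fun ω => x ω - x₀ ω - η • G ω) h𝓕
    ((hx.sub hx₀).sub (hGm.const_smul η)) ((hx₂.sub hx₀₂).sub (hG₂.const_smul η)) hnoise₂ hnoise]
  have hdrift := hφ.integral_norm_sub_sub_smul_sq_le hφψ ht η hx₀₂ hx₂ hψx₀ (μ := μ)
  have hnoise_var : ∫ ω, ‖η • (g ω - G ω)‖ ^ 2 ∂μ ≤ η ^ 2 * σl ^ 2 := by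
    simp_rw [norm_smul, mul_pow, Real.norm_eq_abs, sq_abs]
    rw [integral_const_mul]
    exact mul_le_mul_of_nonneg_left hvar (sq_nonneg η)
  linarith

theorem integral_norm_sub_sq_localSGD_le {𝓕 : ℕ → MeasurableSpace Ω} (h𝓕_le : ∀ k, 𝓕 k ≤ m)
    (h𝓕_mono : Monotone 𝓕) {φ ψ : E → E} {L : ℝ≥0} (hφ : LipschitzWith L φ) {σl σg : ℝ}
    (hφψ : ∀ x, ‖φ x - ψ x‖ ^ 2 ≤ σg ^ 2) {K : ℕ} (hK : 0 < K) {η : ℝ} (hη₀ : 0 ≤ η)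
    (hη : 8 * K * L * η ≤ 1) {x₀ : Ω → E} {x g : ℕ → Ω → E}
    (hx₀ : StronglyMeasurable[𝓕 0] x₀) (hx₀₂ : MemLp x₀ 2 μ)
    (hψx₀ : MemLp (fun ω => ψ (x₀ ω)) 2 μ) (hx : ∀ k, StronglyMeasurable[𝓕 k] (x k))
    (hx₂ : ∀ k, MemLp (x k) 2 μ) (hg₂ : ∀ k, MemLp (g k) 2 μ) (hinit : x 0 = x₀)
    (hupdate : ∀ k ω, x (k + 1) ω = x k ω - η • g k ω)
    (hunbiased : ∀ k, μ[g k|𝓕 k] =ᵐ[μ] fun ω => φ (x k ω))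
    (hvar : ∀ k, ∫ ω, ‖g k ω - φ (x k ω)‖ ^ 2 ∂μ ≤ σl ^ 2) {k : ℕ} (hk : k ≤ K) :
    ∫ ω, ‖x k ω - x₀ ω‖ ^ 2 ∂μ ≤
      3 * K * η ^ 2 * (σl ^ 2 + 6 * K * (σg ^ 2 + ∫ ω, ‖ψ (x₀ ω)‖ ^ 2 ∂μ)) := by
  have hK₁ : (1 : ℝ) ≤ K := by exact_mod_cast hK
  set t : ℝ := (2 * K - 1)⁻¹
  have ht : 0 < t := inv_pos.2 (by linarith)
  have ht_inv : 1 + t⁻¹ = 2 * K := by simp only [t, inv_inv]; ring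
  set β := η ^ 2 * σl ^ 2 + 6 * K * η ^ 2 * (σg ^ 2 + ∫ ω, ‖ψ (x₀ ω)‖ ^ 2 ∂μ)
  have hrec : ∀ j, ∫ ω, ‖x (j + 1) ω - x₀ ω‖ ^ 2 ∂μ ≤
      (1 + (t + 6 * K * η ^ 2 * L ^ 2)) * ∫ ω, ‖x j ω - x₀ ω‖ ^ 2 ∂μ + β := by
    intro j
    have hstep := integral_norm_sub_sq_sgd_step_le (h𝓕_le j) hφ hφψ ht η
      (hx₀.mono (h𝓕_mono (Nat.zero_le j))) hx₀₂ hψx₀ (hx j) (hx₂ j) (hg₂ j) (hunbiased j)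
      (hvar j)
    rw [ht_inv] at hstep
    simp_rw [hupdate]
    linarith
  have hε : ((K : ℝ) - 1) * (t + 6 * K * η ^ 2 * L ^ 2) ≤ 1 := by
    have hKt : ((K : ℝ) - 1) * t ≤ 1 / 2 := by
      rw [← div_eq_mul_inv, div_le_iff₀ (by linarith)]
      linarith
    have hKLη₀ : 0 ≤ (K : ℝ) * L * η := by positivity
    have hKLη : ((K : ℝ) * L * η) ^ 2 ≤ 1 / 64 := by nlinarith
    have hKηL : 0 ≤ (K : ℝ) * η ^ 2 * L ^ 2 := by positivity
    nlinarith
  calc ∫ ω, ‖x k ω - x₀ ω‖ ^ 2 ∂μ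
      ≤ β * ∑ j ∈ Finset.range k, (1 + (t + 6 * K * η ^ 2 * L ^ 2)) ^ j :=
        le_mul_geom_sum_of_le_mul_add (a := fun j => ∫ ω, ‖x j ω - x₀ ω‖ ^ 2 ∂μ)
          (by positivity) (by simp [hinit]) hrec k
    _ ≤ β * (3 * K) := by
        gcongr
        exact (geom_sum_one_add_le_three_mul (by positivity) hk hε).trans (by gcongr)
    _ = _ := by ring

end LocalSGD

theorem gradient_globalObjective {E : Type*} [NormedAddCommGroup E] [InnerProductSpace ℝ E]
    [CompleteSpace E] {N : ℕ} {f : Fin N → E → ℝ} (hf : ∀ i, Differentiable ℝ (f i)) (x : E) :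
    gradient (globalObjective N f) x = (N : ℝ)⁻¹ • ∑ i, gradient (f i) x := by
  refine HasGradientAt.gradient ?_
  rw [hasGradientAt_iff_hasFDerivAt, map_smul, map_sum]
  exact (HasFDerivAt.fun_sum fun i _ =>
    hasGradientAt_iff_hasFDerivAt.1 (hf i x).hasGradientAt).const_mul _

theorem bounded_local_drift_general
    {dd N K : ℕ}
    {Ω : Type*} [m : MeasurableSpace Ω] (μ : Measure Ω) [IsProbabilityMeasure μ]
    (f : Fin N → EuclideanSpace ℝ (Fin dd) → ℝ) (L σl σg ηl : ℝ)
    (hdiff : ∀ i, Differentiable ℝ (f i))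
    (hsmooth : ∀ i x y, ‖gradient (f i) x - gradient (f i) y‖ ≤ L * ‖x - y‖)
    (hA2 : ∀ i x, ‖gradient (f i) x - gradient (globalObjective N f) x‖ ^ 2 ≤ σg ^ 2)
    (hηl_pos : 0 < ηl) (hηl : ηl ≤ 1 / (8 * K * L))
    (x0 : Ω → EuclideanSpace ℝ (Fin dd))
    (xloc : Fin N → ℕ → Ω → EuclideanSpace ℝ (Fin dd))
    (g : Fin N → ℕ → Ω → EuclideanSpace ℝ (Fin dd))
    (𝓕 : ℕ → MeasurableSpace Ω) (h𝓕_le : ∀ k, 𝓕 k ≤ m) (h𝓕_mono : Monotone 𝓕)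
    (hx0_meas : StronglyMeasurable[𝓕 0] x0) (hx0_L2 : MemLp x0 2 μ)
    (hxloc_meas : ∀ i k, StronglyMeasurable[𝓕 k] (xloc i k))
    (hxloc_L2 : ∀ i k, MemLp (xloc i k) 2 μ)
    (hg_L2 : ∀ i k, MemLp (g i k) 2 μ)
    (hinit : ∀ i, xloc i 0 = x0)
    (hupdate : ∀ i k ω, xloc i (k + 1) ω = xloc i k ω - ηl • g i k ω)
    (hA1_unbiased : ∀ i k, μ[g i k|𝓕 k] =ᵐ[μ] fun ω => gradient (f i) (xloc i k ω))
    (hA1_var : ∀ i k, ∫ ω, ‖g i k ω - gradient (f i) (xloc i k ω)‖ ^ 2 ∂μ ≤ σl ^ 2) :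
    ∀ k, 1 ≤ k → k ≤ K →
      (N : ℝ)⁻¹ * ∑ i, ∫ ω, ‖xloc i k ω - x0 ω‖ ^ 2 ∂μ ≤
        5 * K * ηl ^ 2 * (σl ^ 2 + 6 * K * σg ^ 2)
          + 30 * K ^ 2 * ηl ^ 2 * ∫ ω, ‖gradient (globalObjective N f) (x0 ω)‖ ^ 2 ∂μ := by
  intro k hk₁ hkK
  have hK : 0 < K := hk₁.trans hkK
  have hKL : 0 < 8 * K * L := by
    by_contra! hKL
    exact hηl_pos.not_ge (hηl.trans (div_nonpos_of_nonneg_of_nonpos zero_le_one hKL))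
  have hL : 0 ≤ L := (pos_of_mul_pos_right hKL (by positivity)).le
  have hlip : ∀ i, LipschitzWith ⟨L, hL⟩ (gradient (f i)) :=
    fun i => lipschitzWith_iff_norm_sub_le.2 (hsmooth i)
  have hgradF : MemLp (fun ω => gradient (globalObjective N f) (x0 ω)) 2 μ := by
    simp_rw [gradient_globalObjective hdiff]
    exact (memLp_finsetSum _ fun i _ => (hlip i).memLp_comp hx0_L2).const_smul (N : ℝ)⁻¹
  have hclient : ∀ i, ∫ ω, ‖xloc i k ω - x0 ω‖ ^ 2 ∂μ ≤ 3 * K * ηl ^ 2 *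
      (σl ^ 2 + 6 * K * (σg ^ 2 + ∫ ω, ‖gradient (globalObjective N f) (x0 ω)‖ ^ 2 ∂μ)) :=
    fun i => integral_norm_sub_sq_localSGD_le h𝓕_le h𝓕_mono (hlip i) (hA2 i) hK hηl_pos.le
      ((le_div_iff₀' hKL).1 hηl) hx0_meas hx0_L2 hgradF (hxloc_meas i) (hxloc_L2 i) (hg_L2 i)
      (hinit i) (hupdate i) (hA1_unbiased i) (hA1_var i) hkK
  have hbound : (0 : ℝ) ≤ K * ηl ^ 2 * (σl ^ 2 + 6 * K * σg ^ 2
      + 6 * K * ∫ ω, ‖gradient (globalObjective N f) (x0 ω)‖ ^ 2 ∂μ) := by positivity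
  refine inv_mul_le_of_le_mul₀ (Nat.cast_nonneg N) (by positivity) ?_
  calc ∑ i, ∫ ω, ‖xloc i k ω - x0 ω‖ ^ 2 ∂μ ≤ N * (3 * K * ηl ^ 2 *
      (σl ^ 2 + 6 * K * (σg ^ 2 + ∫ ω, ‖gradient (globalObjective N f) (x0 ω)‖ ^ 2 ∂μ))) := by
        simpa using Finset.sum_le_card_nsmul Finset.univ _ _ fun i _ => hclient i
    _ ≤ _ := by gcongr; linarith

/-- **Bounded local drift (Lemma 2, following Reddi et al.).**
Consider one round of Algorithm 1 option (i): each client `i` starts from the global model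
`x⁰` and performs `K` local SGD steps `x_i^{k+1} = x_i^k − η_l g_i^k`, where the stochastic
gradients satisfy Assumption 1 (conditional unbiasedness `E[g_i^k | 𝓕_k] = ∇f_i(x_i^k)` and
variance bound `E‖g_i^k − ∇f_i(x_i^k)‖² ≤ σ_l²`) and Assumption 2 (heterogeneity
`‖∇f_i − ∇f‖² ≤ σ_g²`), with each `f_i` `L`-smooth.  If `η_l ≤ 1/(8KL)`, then for every
`k ∈ {1, …, K}`, `(1/N) ∑ᵢ E‖x_i^k − x⁰‖² ≤ 5Kη_l²(σ_l² + 6Kσ_g²) + 30K²η_l² E‖∇f(x⁰)‖²`. -/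
theorem bounded_local_drift
    {dd N K : ℕ} (hN : 0 < N) (hK : 0 < K)
    {Ω : Type*} [m : MeasurableSpace Ω] (μ : Measure Ω) [IsProbabilityMeasure μ]
    (f : Fin N → EuclideanSpace ℝ (Fin dd) → ℝ) (L σl σg ηl : ℝ) (hL : 0 < L)
    (hdiff : ∀ i, Differentiable ℝ (f i))
    (hsmooth : ∀ i x y, ‖gradient (f i) x - gradient (f i) y‖ ≤ L * ‖x - y‖)
    (hA2 : ∀ i x, ‖gradient (f i) x - gradient (globalObjective N f) x‖ ^ 2 ≤ σg ^ 2)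
    (hηl_pos : 0 < ηl) (hηl : ηl ≤ 1 / (8 * K * L))
    (x0 : Ω → EuclideanSpace ℝ (Fin dd))
    (xloc : Fin N → ℕ → Ω → EuclideanSpace ℝ (Fin dd))
    (g : Fin N → ℕ → Ω → EuclideanSpace ℝ (Fin dd))
    (𝓕 : ℕ → MeasurableSpace Ω) (h𝓕_le : ∀ k, 𝓕 k ≤ m) (h𝓕_mono : Monotone 𝓕)
    (hx0_meas : StronglyMeasurable[𝓕 0] x0) (hx0_L2 : MemLp x0 2 μ)
    (hxloc_meas : ∀ i k, StronglyMeasurable[𝓕 k] (xloc i k))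
    (hxloc_L2 : ∀ i k, MemLp (xloc i k) 2 μ)
    (hg_L2 : ∀ i k, MemLp (g i k) 2 μ)
    (hinit : ∀ i, xloc i 0 = x0)
    (hupdate : ∀ i k ω, xloc i (k + 1) ω = xloc i k ω - ηl • g i k ω)
    (hA1_unbiased : ∀ i k, μ[g i k|𝓕 k] =ᵐ[μ] fun ω => gradient (f i) (xloc i k ω))
    (hA1_var : ∀ i k, ∫ ω, ‖g i k ω - gradient (f i) (xloc i k ω)‖ ^ 2 ∂μ ≤ σl ^ 2) :
    ∀ k, 1 ≤ k → k ≤ K →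
      (N : ℝ)⁻¹ * ∑ i, ∫ ω, ‖xloc i k ω - x0 ω‖ ^ 2 ∂μ ≤
        5 * K * ηl ^ 2 * (σl ^ 2 + 6 * K * σg ^ 2)
          + 30 * K ^ 2 * ηl ^ 2 * ∫ ω, ‖gradient (globalObjective N f) (x0 ω)‖ ^ 2 ∂μ :=
  bounded_local_drift_general (m := m) μ f L σl σg ηl hdiff hsmooth hA2 hηl_pos hηl x0 xloc g 𝓕
    h𝓕_le h𝓕_mono hx0_meas hx0_L2 hxloc_meas hxloc_L2 hg_L2 hinit hupdate hA1_unbiased hA1_var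
end

section
/- Let α : ℕ → ℝ with α(t) ≥ 1 for all t, let β ≥ 0, let γ : ℕ → ℝ be nonnegative, and let u : ℕ → ℝ be a nonnegative sequence with u(0) = 0, u(1) ≤ γ(0), and u(t+1) ≤ α(t)·u(t) + β²·u(t−1) + γ(t) for all integers t ≥ 1. Then for every integer t ≥ 0, u(t+1) ≤ ∑_{τ=0}^{t} γ(τ) · ∏_{k=τ+1}^{t} (α(k) + β²). -/
/-- **Unrolling of the two-term (momentum) stability recursion.**
If `α t ≥ 1` for all `t`, `β ≥ 0`, `γ` is nonnegative, and the nonnegative sequence `u`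
satisfies `u 0 = 0`, `u 1 ≤ γ 0` and `u(t+1) ≤ α(t) u(t) + β² u(t−1) + γ(t)` for all `t ≥ 1`,
then `u(t+1) ≤ ∑_{τ=0}^{t} γ(τ) ∏_{k=τ+1}^{t} (α(k) + β²)` for every `t ≥ 0`. -/
theorem momentum_stability_unrolled (α : ℕ → ℝ) (hα : ∀ t, 1 ≤ α t) (β : ℝ) (hβ : 0 ≤ β)
    (γ : ℕ → ℝ) (hγ : ∀ t, 0 ≤ γ t)
    (u : ℕ → ℝ) (hu : ∀ t, 0 ≤ u t) (hu0 : u 0 = 0) (hu1 : u 1 ≤ γ 0)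
    (hrec : ∀ t : ℕ, 1 ≤ t → u (t + 1) ≤ α t * u t + β ^ 2 * u (t - 1) + γ t) :
    ∀ t : ℕ, u (t + 1) ≤
      ∑ τ ∈ Finset.range (t + 1), γ τ * ∏ k ∈ Finset.Icc (τ + 1) t, (α k + β ^ 2) := by
  set S : ℕ → ℝ := fun t => ∑ τ ∈ Finset.range (t + 1),
      γ τ * ∏ k ∈ Finset.Icc (τ + 1) t, (α k + β ^ 2) with hS
  have hfac : ∀ k, (1 : ℝ) ≤ α k + β ^ 2 := fun k =>
    le_add_of_le_of_nonneg (hα k) (sq_nonneg β)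
  have hSnn : ∀ t, 0 ≤ S t := by
    intro t
    apply Finset.sum_nonneg
    intro τ _
    exact mul_nonneg (hγ τ) (Finset.prod_nonneg fun k _ => le_trans zero_le_one (hfac k))
  have hstep : ∀ t, S (t + 1) = (α (t + 1) + β ^ 2) * S t + γ (t + 1) := by
    intro t
    simp only [hS]
    rw [Finset.sum_range_succ]
    have he : Finset.Icc (t + 1 + 1) (t + 1) = ∅ := by
      rw [Finset.Icc_eq_empty]; omega
    rw [he, Finset.prod_empty, mul_one]
    congr 1
    rw [Finset.mul_sum]
    apply Finset.sum_congr rfl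
    intro τ hτ
    have hτt : τ + 1 ≤ t + 1 := by
      have := Finset.mem_range.mp hτ; omega
    rw [Finset.prod_Icc_succ_top hτt]
    ring
  have hmono : ∀ t, S t ≤ S (t + 1) := by
    intro t
    rw [hstep t]
    calc S t = 1 * S t + 0 := by ring
    _ ≤ (α (t + 1) + β ^ 2) * S t + γ (t + 1) := by
        gcongr
        · exact hSnn t
        · exact hfac _
        · exact hγ _
  intro t
  induction t using Nat.strong_induction_on with
  | _ t ih =>
    match t with
    | 0 => simpa [hS] using hu1
    | (n + 1) =>
      have h1 : u (n + 1) ≤ S n := ih n (by omega)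
      have h2 : u n ≤ S n := by
        match n with
        | 0 => rw [hu0]; exact hSnn 0
        | (m + 1) => exact le_trans (ih m (by omega)) (hmono m)
      calc u (n + 1 + 1) ≤ α (n + 1) * u (n + 1) + β ^ 2 * u (n + 1 - 1) + γ (n + 1) :=
            hrec (n + 1) (by omega)
      _ = α (n + 1) * u (n + 1) + β ^ 2 * u n + γ (n + 1) := by norm_num
      _ ≤ α (n + 1) * S n + β ^ 2 * S n + γ (n + 1) := by
          have := hα (n+1)
          gcongr <;> first
            | exact le_trans zero_le_one (hα _)
            | exact sq_nonneg β
      _ = (α (n + 1) + β ^ 2) * S n + γ (n + 1) := by ring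
      _ = S (n + 1) := (hstep n).symm
end
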